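/- arXiv:math/0205216 — 2 statements merged into one kernel-verified Lean document; each statement's English description precedes it below -/
import Mathlib

section
/- There is no morphism f on finite words over {1,2,3} with f(w) = w (w the Arshon sequence), |f(1)| + |f(2)| + |f(3)| > 3, and |f(1)| = 3. -/
open List Filter

/-- Image of a letter in an odd (1-based) position under ψ. -/
def oddBlock : ℕ → List ℕ
  | 1 => [1, 2, 3]
  | 2 => [2, 3, 1]
  | 3 => [3, 1, 2]
  | _ => []

/-- Image of a letter in an even (1-based) position under ψ. -/
def evenBlock : ℕ → List ℕ
  | 1 => [3, 2, 1]
  | 2 => [1, 3, 2]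
  | 3 => [2, 1, 3]
  | _ => []

/-- The Arshon map ψ: replace the letter at each odd (1-based) position by its
`oddBlock`, and the letter at each even position by its `evenBlock`. -/
def psi (l : List ℕ) : List ℕ :=
  (l.zipIdx.map fun p => if p.2 % 2 = 0 then oddBlock p.1 else evenBlock p.1).flatten

/-- The Arshon sequence `w = lim ψ^k(1)` as an infinite word: since
`|ψ^[n+1] [1]| = 3^(n+1) > n`, the `n`-th letter (0-based) is well defined. -/
def arshon (n : ℕ) : ℕ := (psi^[n + 1] [1]).getD n 0

/-- A word over the alphabet {1,2,3}. -/
def Word123 (l : List ℕ) : Prop := ∀ a ∈ l, a = 1 ∨ a = 2 ∨ a = 3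

/-- A morphism on finite words over {1,2,3}. -/
def IsMorphism123 (f : List ℕ → List ℕ) : Prop :=
  (∀ u v, f (u ++ v) = f u ++ f v) ∧ ∀ l, Word123 l → Word123 (f l)

/-- `f(w) = w` where `w` is the infinite Arshon word: the image of every finite
prefix of `w` is again a prefix of `w`, and these images have unbounded length
(so that `f(w)` is genuinely the infinite word `w`). -/
def FixesArshon (f : List ℕ → List ℕ) : Prop :=
  (∀ n, f ((List.range n).map arshon)
      = (List.range (f ((List.range n).map arshon)).length).map arshon) ∧
  Tendsto (fun n => (f ((List.range n).map arshon)).length) atTop atTop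

/-- The infinite word `s` is obtained by iterating the morphism `f` on the
letter 1: `f(1)` begins with 1, `|f^k(1)| → ∞`, and `s = lim f^k(1)`. -/
def IterLimit (f : List ℕ → List ℕ) (s : ℕ → ℕ) : Prop :=
  (∃ t, f [1] = 1 :: t) ∧
  Tendsto (fun k => (f^[k] [1]).length) atTop atTop ∧
  ∀ k n, n < (f^[k] [1]).length → (f^[k] [1]).getD n 0 = s n

/-!
If `|f(1)| = 3`, then `f(1)` is the prefix `123` of `w`, and each letter `1` at position `n` of
`w` produces an occurrence of `123` at position `|f(w[0, n))|`, which is a linear combination of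
`3, |f(2)|, |f(3)|` with the letter counts of `w[0, n)` as coefficients. Reading `w` as the
concatenation of the ψ-blocks of its own letters shows that `123` only occurs at positions
`≡ 0, 1, 5 (mod 6)`. The `1`s at positions 7, 11, 13 and 19 give four such congruences for
`|f(2)|` and `|f(3)|` that have no common solution.
-/

/-- The block ψ substitutes for the letter `a` at the 0-based index `i` (an even index is an
odd position in the 1-based count). -/
def psiBlock (i a : ℕ) : List ℕ := if i % 2 = 0 then oddBlock a else evenBlock a

/-- ψ on a word whose first letter sits at index `s` of the ambient word. -/
def psiFrom (s : ℕ) (l : List ℕ) : List ℕ :=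
  ((l.zipIdx s).map fun p => psiBlock p.2 p.1).flatten

lemma psi_eq_psiFrom_zero (l : List ℕ) : psi l = psiFrom 0 l := rfl

lemma psiFrom_cons (s a : ℕ) (l : List ℕ) :
    psiFrom s (a :: l) = psiBlock s a ++ psiFrom (s + 1) l := by
  simp [psiFrom, zipIdx_cons]

lemma length_psiBlock {a : ℕ} (ha : a = 1 ∨ a = 2 ∨ a = 3) (i : ℕ) :
    (psiBlock i a).length = 3 := by
  rcases ha with rfl | rfl | rfl <;> unfold psiBlock <;> split <;> rfl

lemma Word123.tail {a : ℕ} {l : List ℕ} (h : Word123 (a :: l)) : Word123 l :=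
  fun x hx => h x (mem_cons_of_mem a hx)

lemma length_psiFrom {l : List ℕ} (hl : Word123 l) (s : ℕ) :
    (psiFrom s l).length = 3 * l.length := by
  induction l generalizing s with
  | nil => rfl
  | cons a l ih =>
    rw [psiFrom_cons, length_append, length_psiBlock (hl a mem_cons_self), ih hl.tail,
      length_cons]
    ring

lemma getD_psiFrom {l : List ℕ} (hl : Word123 l) (s : ℕ) {q r : ℕ} (hq : q < l.length)
    (hr : r < 3) :
    (psiFrom s l).getD (3 * q + r) 0 = (psiBlock (s + q) (l.getD q 0)).getD r 0 := by
  induction l generalizing s q with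
  | nil => simp at hq
  | cons a l ih =>
    have hlen := length_psiBlock (hl a mem_cons_self) s
    rw [psiFrom_cons]
    rcases q with _ | q
    · simpa using getD_append _ _ 0 r (hlen ▸ hr : r < (psiBlock s a).length)
    · rw [getD_append_right _ _ _ _ (by omega), hlen,
        show 3 * (q + 1) + r - 3 = 3 * q + r by omega,
        ih hl.tail (s + 1) (by simpa using hq), show s + 1 + q = s + (q + 1) by ring]
      rfl

lemma word123_psiBlock (i a : ℕ) : Word123 (psiBlock i a) := by
  intro x hx
  unfold psiBlock oddBlock evenBlock at hx
  split at hx <;> split at hx <;> simp at hx <;> omega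

lemma word123_psi (l : List ℕ) : Word123 (psi l) := by
  intro x hx
  obtain ⟨_, hb, hxb⟩ := mem_flatten.mp hx
  obtain ⟨p, -, rfl⟩ := List.mem_map.mp hb
  exact word123_psiBlock _ _ x hxb

lemma psi_prefix_psi {u v : List ℕ} (h : u <+: v) : psi u <+: psi v := by
  obtain ⟨t, rfl⟩ := h
  simp only [psi, zipIdx_append, map_append, flatten_append]
  exact prefix_append _ _

lemma iterate_psi_prefix_iterate_psi {u v : List ℕ} (h : u <+: v) (k : ℕ) :
    psi^[k] u <+: psi^[k] v := by
  induction k with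
  | zero => exact h
  | succ k ih => simpa only [Function.iterate_succ_apply'] using psi_prefix_psi ih

lemma word123_iterate_psi (k : ℕ) : Word123 (psi^[k] [1]) := by
  induction k with
  | zero => simp [Word123]
  | succ k ih => rw [Function.iterate_succ_apply']; exact word123_psi _

lemma length_iterate_psi (k : ℕ) : (psi^[k] [1]).length = 3 ^ k := by
  induction k with
  | zero => rfl
  | succ k ih =>
    rw [Function.iterate_succ_apply', psi_eq_psiFrom_zero,
      length_psiFrom (word123_iterate_psi k), ih, pow_succ, mul_comm]

lemma iterate_psi_one_prefix_of_le {j k : ℕ} (h : j ≤ k) : psi^[j] [1] <+: psi^[k] [1] := by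
  induction k, h using Nat.le_induction with
  | base => exact prefix_refl _
  | succ k _ ih =>
    rw [Function.iterate_succ_apply]
    exact ih.trans (iterate_psi_prefix_iterate_psi ⟨[2, 3], rfl⟩ k)

lemma lt_length_iterate_psi_succ (n : ℕ) : n < (psi^[n + 1] [1]).length := by
  rw [length_iterate_psi]
  exact (Nat.lt_pow_self (by norm_num)).trans (Nat.pow_lt_pow_right (by norm_num) n.lt_succ_self)

lemma getD_iterate_psi_one {k n : ℕ} (h : n < (psi^[k] [1]).length) :
    (psi^[k] [1]).getD n 0 = arshon n := by
  have hn := lt_length_iterate_psi_succ n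
  obtain ⟨j, hkj, hnj⟩ : ∃ j, k ≤ j ∧ n + 1 ≤ j := ⟨max k (n + 1), le_max_left .., le_max_right ..⟩
  rw [arshon, getD_eq_getElem _ _ h, getD_eq_getElem _ _ hn,
    (iterate_psi_one_prefix_of_le hkj).getElem h, (iterate_psi_one_prefix_of_le hnj).getElem hn]

lemma arshon_mem (n : ℕ) : arshon n = 1 ∨ arshon n = 2 ∨ arshon n = 3 := by
  have hn := lt_length_iterate_psi_succ n
  rw [arshon, getD_eq_getElem _ _ hn]
  exact word123_iterate_psi (n + 1) _ (getElem_mem hn)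

lemma arshon_eq_getD_psiBlock (n : ℕ) :
    arshon n = (psiBlock (n / 3) (arshon (n / 3))).getD (n % 3) 0 := by
  have hq := lt_length_iterate_psi_succ (n / 3)
  have hn : 3 * (n / 3) + n % 3 < (psi^[n / 3 + 2] [1]).length := by
    rw [length_iterate_psi, pow_succ]
    rw [length_iterate_psi] at hq
    omega
  conv_lhs => rw [← Nat.div_add_mod n 3]
  rw [← getD_iterate_psi_one hq, ← getD_iterate_psi_one hn, Function.iterate_succ_apply',
    psi_eq_psiFrom_zero, getD_psiFrom (word123_iterate_psi _) 0 hq (Nat.mod_lt _ (by norm_num)),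
    zero_add]

lemma arshon_mod_six_of_123 {p : ℕ} (h1 : arshon p = 1) (h2 : arshon (p + 1) = 2)
    (h3 : arshon (p + 2) = 3) : p % 6 ∈ ({0, 1, 5} : Finset ℕ) := by
  obtain ⟨q, r, hr, rfl⟩ : ∃ q r, r < 3 ∧ p = 3 * q + r :=
    ⟨p / 3, p % 3, Nat.mod_lt _ (by norm_num), (Nat.div_add_mod p 3).symm⟩
  rw [arshon_eq_getD_psiBlock] at h1 h2 h3
  have hq := arshon_mem q
  have hq' := arshon_mem (q + 1)
  have hpar := Nat.mod_two_eq_zero_or_one q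
  interval_cases r <;> simp only [add_assoc, Nat.reduceAdd, Nat.mul_add_div three_pos,
    Nat.mul_add_mod, Nat.reduceDiv, Nat.reduceMod, add_zero] at h1 h2 h3 <;>
    rcases hq with hx | hx | hx <;> rcases hq' with hy | hy | hy <;> rcases hpar with hp | hp <;>
    simp [psiBlock, oddBlock, evenBlock, hx, hy, hp, Nat.add_mod q 1] at h1 h2 h3 ⊢ <;> omega

def arshonPrefix (n : ℕ) : List ℕ := (range n).map arshon

lemma getD_arshonPrefix {j n : ℕ} (h : j < n) : (arshonPrefix n).getD j 0 = arshon j := by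
  simp [arshonPrefix, h]

lemma take_arshonPrefix {m n : ℕ} (h : n ≤ m) : (arshonPrefix m).take n = arshonPrefix n := by
  simp [arshonPrefix, ← map_take, take_range, h]

lemma arshonPrefix_succ (n : ℕ) : arshonPrefix (n + 1) = arshonPrefix n ++ [arshon n] := by
  simp [arshonPrefix, range_succ]

lemma arshonPrefix_length_iterate_psi (k : ℕ) :
    arshonPrefix (psi^[k] [1]).length = psi^[k] [1] := by
  refine ext_getElem (by simp [arshonPrefix]) fun j hj h => ?_
  rw [← getD_eq_getElem _ 0, ← getD_eq_getElem _ 0, getD_iterate_psi_one h,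
    getD_arshonPrefix (by simpa [arshonPrefix] using hj)]

lemma arshonPrefix_twenty :
    arshonPrefix 20 = [1, 2, 3, 1, 3, 2, 3, 1, 2, 3, 2, 1, 3, 1, 2, 1, 3, 2, 3, 1] := by
  have h27 : arshonPrefix 27 = psi^[3] [1] := by
    simpa only [length_iterate_psi, Nat.reducePow] using arshonPrefix_length_iterate_psi 3
  rw [← take_arshonPrefix (by norm_num : 20 ≤ 27), h27]
  decide

def MapsArshonPrefixes (f : List ℕ → List ℕ) : Prop :=
  ∀ n, f (arshonPrefix n) = arshonPrefix (f (arshonPrefix n)).length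

section Morphism

variable {f : List ℕ → List ℕ}

lemma map_nil_of_map_append (hf : ∀ u v, f (u ++ v) = f u ++ f v) : f [] = [] := by
  simpa using congrArg length (hf [] [])

lemma length_map_of_map_append (hf : ∀ u v, f (u ++ v) = f u ++ f v) (l : List ℕ) :
    (f l).length = (l.map fun a => (f [a]).length).sum := by
  induction l with
  | nil => simp [map_nil_of_map_append hf]
  | cons a l ih => simpa [ih] using congrArg length (hf [a] l)

lemma arshon_length_image_arshonPrefix_add (hf : ∀ u v, f (u ++ v) = f u ++ f v)
    (hfix : MapsArshonPrefixes f) {n i : ℕ} (hi : i < (f [arshon n]).length) :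
    arshon ((f (arshonPrefix n)).length + i) = (f [arshon n]).getD i 0 := by
  have h := congrArg (·.getD ((f (arshonPrefix n)).length + i) 0) (hfix (n + 1))
  simp only [arshonPrefix_succ, hf, length_append] at h
  rw [getD_append_right _ _ _ _ (by omega), Nat.add_sub_cancel_left,
    getD_arshonPrefix (by omega)] at h
  exact h.symm

lemma image_one_eq_of_length_eq_three (hfix : MapsArshonPrefixes f) (h : (f [1]).length = 3) :
    f [1] = [1, 2, 3] := by
  have h1 : arshonPrefix 1 = [1] := by
    rw [← take_arshonPrefix (by norm_num : 1 ≤ 20), arshonPrefix_twenty]; rfl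
  have h3 : arshonPrefix 3 = [1, 2, 3] := by
    rw [← take_arshonPrefix (by norm_num : 3 ≤ 20), arshonPrefix_twenty]; rfl
  simpa only [h1, h, h3] using hfix 1

lemma length_image_arshonPrefix_mod_six (hf : ∀ u v, f (u ++ v) = f u ++ f v)
    (hfix : MapsArshonPrefixes f) (h123 : f [1] = [1, 2, 3]) {n : ℕ} (hn : arshon n = 1) :
    (f (arshonPrefix n)).length % 6 ∈ ({0, 1, 5} : Finset ℕ) := by
  have hocc (i : ℕ) (hi : i < 3) :=
    arshon_length_image_arshonPrefix_add hf hfix (n := n) (i := i) (by simpa [hn, h123])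
  simp only [hn, h123] at hocc
  exact arshon_mod_six_of_123 (hocc 0 (by norm_num)) (hocc 1 (by norm_num)) (hocc 2 (by norm_num))

end Morphism

/-- There is no morphism `f` with `f(w) = w`, `|f(1)|+|f(2)|+|f(3)| > 3`
and `|f(1)| = 3`. -/
theorem arshon_no_fixing_morphism_length_eq_3 :
    ¬ ∃ f : List ℕ → List ℕ, IsMorphism123 f ∧ FixesArshon f ∧
      (f [1]).length + (f [2]).length + (f [3]).length > 3 ∧
      (f [1]).length = 3 := by
  rintro ⟨f, ⟨hf, -⟩, ⟨hfix, -⟩, -, hlen⟩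
  have h123 := image_one_eq_of_length_eq_three hfix hlen
  have hmod (n : ℕ) (hn : n < 20) (h1 : (arshonPrefix 20).getD n 0 = 1) :
      (((arshonPrefix 20).take n).map fun a => (f [a]).length).sum % 6 ∈
        ({0, 1, 5} : Finset ℕ) := by
    rw [take_arshonPrefix hn.le, ← length_map_of_map_append hf]
    exact length_image_arshonPrefix_mod_six hf hfix h123 (getD_arshonPrefix hn ▸ h1)
  simp only [arshonPrefix_twenty] at hmod
  have h7 := hmod 7 (by norm_num) rfl
  have h11 := hmod 11 (by norm_num) rfl
  have h13 := hmod 13 (by norm_num) rfl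
  have h19 := hmod 19 (by norm_num) rfl
  simp only [take_succ_cons, take_zero, map_cons, map_nil, h123, length_cons, length_nil,
    sum_cons, sum_nil, zero_add, add_zero, Nat.reduceAdd, Finset.mem_insert,
    Finset.mem_singleton] at h7 h11 h13 h19
  omega
end

section
/- If f is a morphism on finite words over {1,3} such that f(1) begins with the letter 1, the lengths |f^k(1)| tend to infinity, and the σ-sequence w_σ equals lim_{k→∞} f^k(1), then |f(1)| ≡ 0 (mod 4). -/
open List Filter

/-- `σ(n)`: writing `n = 2^t * (4s + σ)` with `σ ∈ {1,3}` and `2^t` the largest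
power of 2 dividing `n`, return `σ` (junk value 0 at `n = 0`). -/
def sigma (n : ℕ) : ℕ := (ordCompl[2] n) % 4

/-- The σ-sequence as an infinite word: its `n`-th letter (0-based) is `σ(n+1)`. -/
def sigmaSeq (n : ℕ) : ℕ := sigma (n + 1)

/-- A word over the alphabet {1,3}. -/
def Word13 (l : List ℕ) : Prop := ∀ a ∈ l, a = 1 ∨ a = 3

/-- A morphism on finite words over {1,3}. -/
def IsMorphism13 (f : List ℕ → List ℕ) : Prop :=
  (∀ u v, f (u ++ v) = f u ++ f v) ∧ ∀ l, Word13 l → Word13 (f l)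

/-! Since `w_σ = lim f^k(1)`, the morphism `f` maps prefixes of `w_σ` to prefixes of `w_σ`; so if
`w_σ` starts with a square `uu`, it also starts with `f(u) f(u)`. Taking `u = 1`, the prefix of
length `m = |f(1)| ≥ 2` repeats. Because `σ(n) = n mod 4` for odd `n` and `σ(2n) = σ(n)`, a repeated
prefix of length `p` forces `p ≡ 0 (mod 4)` or `p ∈ {1, 3}`. If `m = 3`, then `f(1) = 113`, and the
square `113 113` gives `|f(3)| ≡ 2 (mod 4)`; the letter 3 at positions 2 and 6 of `w_σ = 1131133…`
makes `f(3)` occur at positions 6 and `12 + 2|f(3)|`, where `w_σ` has the letters 3 and 1. -/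

def OccursAt {α : Type*} (u : List α) (s : ℕ → α) (p : ℕ) : Prop :=
  ∀ i (hi : i < u.length), u[i] = s (p + i)

section OccursAt

variable {α : Type*} {s : ℕ → α}

theorem occursAt_append {u v : List α} {p : ℕ} :
    OccursAt (u ++ v) s p ↔ OccursAt u s p ∧ OccursAt v s (p + u.length) := by
  constructor
  · intro h
    refine ⟨fun i hi => ?_, fun i hi => ?_⟩
    · rw [← h i (by simp only [List.length_append]; omega), List.getElem_append_left hi]
    · rw [add_assoc, ← h (u.length + i) (by simp only [List.length_append]; omega),
        List.getElem_append_right (by omega)]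
      simp
  · rintro ⟨hu, hv⟩ i hi
    by_cases hiu : i < u.length
    · rw [List.getElem_append_left hiu, hu i hiu]
    · rw [List.getElem_append_right (by omega),
        hv _ (by simp only [List.length_append] at hi; omega)]
      congr 1
      omega

theorem OccursAt.eq {u : List α} {p q : ℕ} (hp : OccursAt u s p) (hq : OccursAt u s q)
    {i : ℕ} (hi : i < u.length) : s (p + i) = s (q + i) := by
  rw [← hp i hi, hq i hi]

theorem OccursAt.prefix {u v : List α} {p : ℕ} (hu : OccursAt u s p) (hv : OccursAt v s p)
    (huv : u.length ≤ v.length) : u <+: v := by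
  rw [List.prefix_iff_eq_take]
  refine List.ext_getElem (by simp [huv]) fun i hi _ => ?_
  rw [List.getElem_take, hu i hi, hv i (by omega)]

theorem OccursAt.of_prefix {u v : List α} {p : ℕ} (huv : u <+: v) (hv : OccursAt v s p) :
    OccursAt u s p := by
  obtain ⟨r, rfl⟩ := huv
  exact (occursAt_append.1 hv).1

end OccursAt

section IterLimit

variable {f : List ℕ → List ℕ} {s : ℕ → ℕ}

theorem IterLimit.occursAt_iterate (hit : IterLimit f s) (k : ℕ) : OccursAt (f^[k] [1]) s 0 :=
  fun i hi => by rw [zero_add, ← hit.2.2 k i hi, List.getD_eq_getElem]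

theorem IterLimit.two_le_length (hit : IterLimit f s) : 2 ≤ (f [1]).length := by
  obtain ⟨⟨t, ht⟩, htend, -⟩ := hit
  by_contra! hlen
  have hfix : f [1] = [1] := by
    rw [ht] at hlen ⊢
    simpa using hlen
  obtain ⟨k, hk⟩ := (htend.eventually_ge_atTop 2).exists
  simp [Function.iterate_fixed hfix] at hk

variable (hmul : ∀ u v, f (u ++ v) = f u ++ f v)
include hmul

theorem IterLimit.occursAt_map (hit : IterLimit f s) {u : List ℕ} (hu : OccursAt u s 0) :
    OccursAt (f u) s 0 := by
  obtain ⟨k, hk⟩ := (hit.2.1.eventually_ge_atTop u.length).exists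
  obtain ⟨r, hr⟩ := hu.prefix (hit.occursAt_iterate k) hk
  have := hit.occursAt_iterate (k + 1)
  rw [Function.iterate_succ_apply', ← hr, hmul] at this
  exact (occursAt_append.1 this).1

theorem IterLimit.occursAt_map_of_append (hit : IterLimit f s) {u v : List ℕ}
    (huv : OccursAt (u ++ v) s 0) : OccursAt (f v) s (f u).length := by
  have := hit.occursAt_map hmul huv
  rw [hmul] at this
  simpa using (occursAt_append.1 this).2

theorem IterLimit.repeated_prefix (hit : IterLimit f s) {u : List ℕ}
    (huu : OccursAt (u ++ u) s 0) {i : ℕ} (hi : i < (f u).length) :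
    s ((f u).length + i) = s i := by
  have hfu := hit.occursAt_map hmul (occursAt_append.1 huu).1
  simpa using (hit.occursAt_map_of_append hmul huu).eq hfu hi

end IterLimit

theorem sigma_of_odd {n : ℕ} (hn : n % 2 = 1) : sigma n = n % 4 := by
  rw [sigma, Nat.factorization_eq_zero_of_not_dvd (by omega), pow_zero, Nat.div_one]

theorem sigma_two_mul (n : ℕ) : sigma (2 * n) = sigma n := by
  rw [sigma, sigma, Nat.ordCompl_mul, Nat.Prime.factorization_self Nat.prime_two, pow_one,
    Nat.div_self two_pos, one_mul]

theorem sigmaSeq_of_even {n : ℕ} (hn : n % 2 = 0) : sigmaSeq n = (n + 1) % 4 :=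
  sigma_of_odd (by omega)

theorem sigmaSeq_one : sigmaSeq 1 = 1 :=
  (sigma_two_mul 1).trans (sigma_of_odd rfl)

theorem sigmaSeq_three : sigmaSeq 3 = 1 :=
  (sigma_two_mul 2).trans sigmaSeq_one

theorem sigmaSeq_five : sigmaSeq 5 = 3 :=
  (sigma_two_mul 3).trans (sigma_of_odd rfl)

theorem occursAt_sigmaSeq_prefix : OccursAt [1, 1, 3, 1, 1, 3, 3] sigmaSeq 0 := by
  intro i hi
  simp only [List.length_cons, List.length_nil] at hi
  interval_cases i <;> norm_num [sigmaSeq_of_even, sigmaSeq_one, sigmaSeq_three, sigmaSeq_five]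

theorem sigmaSeq_repeated_prefix {p : ℕ} (hp : ∀ i < p, sigmaSeq (p + i) = sigmaSeq i) :
    p % 4 = 0 ∨ p = 1 ∨ p = 3 := by
  have h4 : p % 4 = 0 ∨ p % 4 = 1 ∨ p % 4 = 2 ∨ p % 4 = 3 := by omega
  rcases h4 with h | h | h | h
  · exact Or.inl h
  · by_contra hne
    have := hp 1 (by omega)
    rw [sigmaSeq_one, sigmaSeq_of_even (by omega)] at this
    omega
  · have := hp 0 (by omega)
    rw [add_zero, sigmaSeq_of_even (by omega), sigmaSeq_of_even (by omega)] at this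
    omega
  · by_contra hne
    have := hp 5 (by omega)
    rw [sigmaSeq_five, sigmaSeq_of_even (by omega)] at this
    omega

theorem IterLimit.sigmaSeq_length_ne_three {f : List ℕ → List ℕ}
    (hmul : ∀ u v, f (u ++ v) = f u ++ f v) (hit : IterLimit f sigmaSeq) :
    (f [1]).length ≠ 3 := by
  intro h3
  have hw := occursAt_sigmaSeq_prefix
  have hf1 : f [1] = [1, 1, 3] :=
    ((hit.occursAt_iterate 1).prefix (hw.of_prefix (by decide)) (by simp [h3])).eq_of_length
      (by simp [h3])
  set L := (f [3]).length
  have hlen : (f [1, 1, 3]).length = 6 + L := by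
    rw [show [1, 1, 3] = [1] ++ ([1] ++ [3]) from rfl, hmul, hmul, hf1]
    simp only [List.length_append, List.length_cons, List.length_nil]
    omega
  have hsq : ∀ i < 6 + L, sigmaSeq (6 + L + i) = sigmaSeq i := by
    rw [← hlen]
    exact fun i hi => hit.repeated_prefix hmul (hw.of_prefix (by decide)) hi
  have hL : (6 + L) % 4 = 0 := by
    rcases sigmaSeq_repeated_prefix hsq with h | h | h <;> omega
  have h113113 := hit.occursAt_map_of_append hmul (u := [1, 1, 3, 1, 1, 3]) (v := [3])
    (hw.of_prefix (by decide))
  have h11 := hit.occursAt_map_of_append hmul (u := [1, 1]) (v := [3])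
    (hw.of_prefix (by decide))
  have key := h113113.eq h11 (i := 0) (by omega)
  have h6 : (f [1, 1]).length = 6 := by
    rw [show [1, 1] = [1] ++ [1] from rfl, hmul, hf1]
    rfl
  have h12 : (f [1, 1, 3, 1, 1, 3]).length = 12 + 2 * L := by
    rw [show [1, 1, 3, 1, 1, 3] = [1, 1, 3] ++ [1, 1, 3] from rfl, hmul, List.length_append, hlen]
    ring
  rw [h12, h6, sigmaSeq_of_even (by omega), sigmaSeq_of_even (by omega)] at key
  omega

/-- If the σ-sequence is obtained by iterating a morphism `f`, then
`|f(1)| ≡ 0 (mod 4)`. -/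
theorem sigma_morphism_length_mod_four
    (f : List ℕ → List ℕ) (hf : IsMorphism13 f) (hit : IterLimit f sigmaSeq) :
    (f [1]).length % 4 = 0 := by
  obtain ⟨hmul, -⟩ := hf
  have hsq : ∀ i < (f [1]).length, sigmaSeq ((f [1]).length + i) = sigmaSeq i := fun _ hi =>
    hit.repeated_prefix hmul (occursAt_sigmaSeq_prefix.of_prefix (by decide)) hi
  rcases sigmaSeq_repeated_prefix hsq with h | h | h
  · exact h
  · exact absurd h (by have := hit.two_le_length; omega)
  · exact absurd h (hit.sigmaSeq_length_ne_three hmul)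
end
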